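/- Every obliviously-computable function f : ℕ^d → ℕ is nondecreasing: if a ≤ b pointwise then f(a) ≤ f(b). -/

import Mathlib

/-- A chemical reaction network with species type `σ`, designated input species
`inputs i` for each of the `d` inputs, an output species, and a leader species. -/
structure CRN (d : ℕ) (σ : Type) [Fintype σ] [DecidableEq σ] where
  /-- Each reaction is a pair `(r, p)` of reactant counts and product counts. -/
  reactions : Finset ((σ → ℕ) × (σ → ℕ))
  inputs : Fin d → σ
  output : σ
  leader : σ
  inputs_inj : Function.Injective inputs
  leader_not_input : ∀ i, inputs i ≠ leader

namespace CRN

variable {d : ℕ} {σ : Type} [Fintype σ] [DecidableEq σ]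

/-- One reaction step: some reaction `(r, p)` with `r ≤ c` pointwise fires,
yielding `c - r + p`. -/
def Step (C : CRN d σ) (c c' : σ → ℕ) : Prop :=
  ∃ rp ∈ C.reactions, rp.1 ≤ c ∧ c' = c - rp.1 + rp.2

/-- Reachability by a finite sequence of reaction steps. -/
def Reachable (C : CRN d σ) : (σ → ℕ) → (σ → ℕ) → Prop :=
  Relation.ReflTransGen C.Step

/-- The initial configuration encoding input `x`: count `x i` of input species
`inputs i`, count 1 of the leader, count 0 of everything else. -/
def init (C : CRN d σ) (x : Fin d → ℕ) : σ → ℕ :=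
  fun s => (∑ i, if C.inputs i = s then x i else 0) + (if s = C.leader then 1 else 0)

/-- A configuration is stable if the output count never changes from it. -/
def Stable (C : CRN d σ) (c : σ → ℕ) : Prop :=
  ∀ c', C.Reachable c c' → c' C.output = c C.output

/-- `C` stably computes `f` if from every configuration reachable from an initial
configuration, a stable configuration with correct output count is reachable. -/
def StablyComputes (C : CRN d σ) (f : (Fin d → ℕ) → ℕ) : Prop :=
  ∀ x c, C.Reachable (C.init x) c →
    ∃ o, C.Reachable c o ∧ C.Stable o ∧ o C.output = f x

/-- A CRN is output-oblivious if the output species is never a reactant. -/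
def OutputOblivious (C : CRN d σ) : Prop :=
  ∀ rp ∈ C.reactions, rp.1 C.output = 0

/-- A CRN is output-monotonic if no reaction decreases the output species count. -/
def OutputMonotonic (C : CRN d σ) : Prop :=
  ∀ rp ∈ C.reactions, rp.1 C.output ≤ rp.2 C.output

end CRN

/-- `f` is obliviously-computable if some output-oblivious CRN stably computes it. -/
def ObliviouslyComputable {d : ℕ} (f : (Fin d → ℕ) → ℕ) : Prop :=
  ∃ (n : ℕ) (C : CRN d (Fin n)), C.OutputOblivious ∧ C.StablyComputes f


/-
Since the output species is never consumed, its count only grows along any execution. Given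
`a ≤ b`, run the CRN on `a` to a configuration `o` with output `f a`; adding the surplus inputs
`b - a` to every configuration along the way turns this into an execution from the initial
configuration for `b`, reaching `o` plus the surplus input molecules. From there a configuration with output `f b` is
still reachable, so `f a ≤ f b`.
-/

namespace CRN

variable {d : ℕ} {σ : Type} [Fintype σ] [DecidableEq σ] {C : CRN d σ}

theorem Step.add_right {c c' : σ → ℕ} (h : C.Step c c') (e : σ → ℕ) :
    C.Step (c + e) (c' + e) := by
  obtain ⟨rp, hrp, hle, rfl⟩ := h
  refine ⟨rp, hrp, hle.trans le_self_add, ?_⟩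
  funext s
  have hs := hle s
  simp only [Pi.add_apply, Pi.sub_apply] at hs ⊢
  omega

theorem Reachable.add_right {c c' : σ → ℕ} (h : C.Reachable c c') (e : σ → ℕ) :
    C.Reachable (c + e) (c' + e) :=
  Relation.ReflTransGen.lift (· + e) (fun _ _ hs => hs.add_right e) _ _ h

theorem OutputOblivious.output_le_of_reachable (hC : C.OutputOblivious) {c c' : σ → ℕ}
    (h : C.Reachable c c') : c C.output ≤ c' C.output := by
  induction h with
  | refl => exact le_rfl
  | tail _ hstep ih =>
    obtain ⟨rp, hrp, -, rfl⟩ := hstep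
    simp only [Pi.add_apply, Pi.sub_apply, hC rp hrp]
    omega

theorem OutputOblivious.output_le_of_reachable_init (hC : C.OutputOblivious)
    {f : (Fin d → ℕ) → ℕ} (hf : C.StablyComputes f) {x : Fin d → ℕ} {c : σ → ℕ}
    (h : C.Reachable (C.init x) c) : c C.output ≤ f x := by
  obtain ⟨o, hco, -, hof⟩ := hf x c h
  exact hof ▸ hC.output_le_of_reachable hco

theorem init_add (x y : Fin d → ℕ) :
    C.init (x + y) = C.init x + fun s => ∑ i, if C.inputs i = s then y i else 0 := by
  funext s
  simp only [init, Pi.add_apply, ite_add_zero, Finset.sum_add_distrib]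
  ring

end CRN

/-- Every obliviously-computable function is nondecreasing. -/
theorem obliviouslyComputable_monotone {d : ℕ} (f : (Fin d → ℕ) → ℕ)
    (hf : ObliviouslyComputable f) :
    ∀ a b : Fin d → ℕ, a ≤ b → f a ≤ f b := by
  intro a b hab
  obtain ⟨n, C, hC, hCf⟩ := hf
  obtain ⟨o, hao, -, hoa⟩ := hCf a _ .refl
  set e : Fin n → ℕ := fun s => ∑ i, if C.inputs i = s then (b - a) i else 0
  have hbo : C.Reachable (C.init b) (o + e) := by
    rw [← add_tsub_cancel_of_le hab, CRN.init_add]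
    exact hao.add_right e
  calc f a = o C.output := hoa.symm
    _ ≤ (o + e) C.output := le_self_add
    _ ≤ f b := hC.output_le_of_reachable_init hCf hbo
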